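/- arXiv:1911.07147 — 8 statements merged into one kernel-verified Lean document; each statement's English description precedes it below -/
import Mathlib

section
/- Let V be a finite set, G a directed acyclic graph on V, and (X_v)_{v∈V} a family of random variables on a probability space (Ω, 𝓕, P), each valued in a nonempty finite type, satisfying the Markov condition with respect to G. Then the joint distribution factorizes according to G: for every assignment (x_v)_{v∈V} of values, P(⋂_{v∈V} {X_v = x_v}) · ∏_{v∈V} P(⋂_{u∈Pa(v)} {X_u = x_u}) = ∏_{v∈V} P({X_v = x_v} ∩ ⋂_{u∈Pa(v)} {X_u = x_u}); equivalently, whenever every conditioning event ⋂_{u∈Pa(v)}{X_u = x_u} has positive probability, P(⋂_{v∈V} {X_v = x_v}) = ∏_{v∈V} P(X_v = x_v ∣ X_u = x_u for all u ∈ Pa(v)). -/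
open MeasureTheory ProbabilityTheory Set

namespace CFS

variable {V : Type*}

/-- Parents of `v`: vertices with an edge into `v`. -/
def Pa (E : V → V → Prop) (v : V) : Set V := {u | E u v}

/-- Children of `v`: vertices with an edge from `v`. -/
def Ch (E : V → V → Prop) (v : V) : Set V := {u | E v u}

/-- Descendants of `v`: vertices reachable from `v` by a nonempty directed path. -/
def Desc (E : V → V → Prop) (v : V) : Set V := {u | Relation.TransGen E v u}

/-- Spouses of `v`: the other parents of the children of `v`. -/
def Sp (E : V → V → Prop) (v : V) : Set V := {u | u ≠ v ∧ ∃ w, E u w ∧ E v w}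

/-- The Markov blanket set `mb(v)` in the graph: parents, children and spouses. -/
def mb (E : V → V → Prop) (v : V) : Set V := Pa E v ∪ Ch E v ∪ Sp E v

/-- The edge relation is acyclic (defines a DAG). -/
def Acyclic (E : V → V → Prop) : Prop := ∀ v, ¬ Relation.TransGen E v v

/-- Adjacency: an edge in either direction. -/
def Adj (E : V → V → Prop) (u v : V) : Prop := E u v ∨ E v u

/-- `f 0, f 1, …, f n` is an undirected path between `i` and `j`:
distinct vertices, consecutive ones adjacent. -/
structure IsUPath (E : V → V → Prop) (i j : V) (n : ℕ) (f : ℕ → V) : Prop where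
  pos : 0 < n
  start : f 0 = i
  finish : f n = j
  inj : ∀ s ≤ n, ∀ t ≤ n, f s = f t → s = t
  adj : ∀ t < n, Adj E (f t) (f (t + 1))

/-- The interior vertex at position `t` of the path `f` is a collider:
both incident edges of the path point into it. -/
def ColliderAt (E : V → V → Prop) (f : ℕ → V) (t : ℕ) : Prop :=
  E (f (t - 1)) (f t) ∧ E (f (t + 1)) (f t)

/-- The path `f 0, …, f n` is blocked by `S`: some interior non-collider lies in `S`,
or some interior collider is such that neither it nor any of its descendants lies in `S`. -/
def Blocked (E : V → V → Prop) (S : Set V) (n : ℕ) (f : ℕ → V) : Prop :=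
  ∃ t, 0 < t ∧ t < n ∧
    ((¬ ColliderAt E f t ∧ f t ∈ S) ∨
      (ColliderAt E f t ∧ f t ∉ S ∧ ∀ d ∈ Desc E (f t), d ∉ S))

/-- `i` and `j` are d-separated by `S`: every undirected path between them is blocked by `S`. -/
def DSep (E : V → V → Prop) (i j : V) (S : Set V) : Prop :=
  ∀ n f, IsUPath E i j n f → Blocked E S n f

/-- The sets `A` and `B` are d-separated by `S`. -/
def DSepSet (E : V → V → Prop) (A B S : Set V) : Prop :=
  ∀ i ∈ A, ∀ j ∈ B, DSep E i j S

variable {Ω Val : Type*} [mΩ : MeasurableSpace Ω] [MeasurableSpace Val]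

/-- The σ-algebra generated by the family of random variables `(X v)_{v ∈ A}`. -/
def famSigma (X : V → Ω → Val) (A : Set V) : MeasurableSpace Ω :=
  ⨆ v ∈ A, MeasurableSpace.comap (X v) inferInstance

theorem famSigma_le {X : V → Ω → Val} (hX : ∀ v, Measurable (X v)) (A : Set V) :
    famSigma X A ≤ mΩ :=
  iSup₂_le fun v _ => (hX v).comap_le

/-- The families `(X a)_{a ∈ A}` and `(X b)_{b ∈ B}` are conditionally independent
given the family `(X s)_{s ∈ S}`. -/
def CondIndepFam [StandardBorelSpace Ω] (X : V → Ω → Val) (hX : ∀ v, Measurable (X v))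
    (P : Measure Ω) [IsFiniteMeasure P] (S A B : Set V) : Prop :=
  CondIndep (famSigma X S) (famSigma X A) (famSigma X B) (famSigma_le hX S) P

/-- The Markov condition: every variable is conditionally independent of its
non-descendants (other than itself and its parents) given its parents. -/
def MarkovCondition [StandardBorelSpace Ω] (E : V → V → Prop) (X : V → Ω → Val)
    (hX : ∀ v, Measurable (X v)) (P : Measure Ω) [IsFiniteMeasure P] : Prop :=
  ∀ v, CondIndepFam X hX P (Pa E v) {v} (univ \ ({v} ∪ Desc E v ∪ Pa E v))

/-- `M ⊆ V \ {C}` is a Markov blanket of `C`: conditioned on `(X m)_{m ∈ M}`,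
all other variables are independent of `X C`. -/
def IsMarkovBlanket [StandardBorelSpace Ω] (X : V → Ω → Val) (hX : ∀ v, Measurable (X v))
    (P : Measure Ω) [IsFiniteMeasure P] (C : V) (M : Set V) : Prop :=
  C ∉ M ∧ CondIndepFam X hX P M {C} (univ \ (M ∪ {C}))

/-- A Markov boundary of `C` is a Markov blanket of `C` no proper subset of which
is a Markov blanket of `C`. -/
def IsMarkovBoundary [StandardBorelSpace Ω] (X : V → Ω → Val) (hX : ∀ v, Measurable (X v))
    (P : Measure Ω) [IsFiniteMeasure P] (C : V) (M : Set V) : Prop :=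
  IsMarkovBlanket X hX P C M ∧ ∀ M' ⊂ M, ¬ IsMarkovBlanket X hX P C M'

/-- Faithfulness: conditional independence holds exactly when d-separation holds. -/
def Faithful [StandardBorelSpace Ω] (E : V → V → Prop) (X : V → Ω → Val)
    (hX : ∀ v, Measurable (X v)) (P : Measure Ω) [IsFiniteMeasure P] : Prop :=
  ∀ A B S : Set V, A.Nonempty → B.Nonempty →
    Disjoint A B → Disjoint A S → Disjoint B S →
    (CondIndepFam X hX P S A B ↔ DSepSet E A B S)

/-- `v` is strongly relevant to `C`: `X C` and `X v` are not conditionally independent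
given all the remaining variables. -/
def StronglyRelevant [StandardBorelSpace Ω] (X : V → Ω → Val) (hX : ∀ v, Measurable (X v))
    (P : Measure Ω) [IsFiniteMeasure P] (C v : V) : Prop :=
  ¬ CondIndepFam X hX P (univ \ {C, v}) {C} {v}

end CFS

open CFS

/-!
Induct on parent-closed sets `s` of vertices, removing a vertex `v` with no descendants in `s`:
the rest of `s` consists of parents and non-descendants of `v`, so the Markov condition at `v`
splits off the factor of `v` from the event `{X_s = x_s}`. Since the variables are discrete, the event
`{X_{Pa v} = x_{Pa v}}` is an atom of the σ-algebra generated by the parents, and on an atom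
of the conditioning σ-algebra conditional independence is the identity
`P(a ∩ b ∩ c) P(c) = P(a ∩ c) P(b ∩ c)`.
-/

open scoped ENNReal

theorem ENNReal.eq_prod_inv_mul_of_mul_prod_eq {ι : Type*} {s : Finset ι} {a : ℝ≥0∞}
    {p q : ι → ℝ≥0∞} (hp₀ : ∀ i ∈ s, p i ≠ 0) (hp : ∀ i ∈ s, p i ≠ ⊤)
    (h : a * ∏ i ∈ s, p i = ∏ i ∈ s, q i) : a = ∏ i ∈ s, (p i)⁻¹ * q i := by
  rw [Finset.prod_mul_distrib, ← ENNReal.prod_inv_distrib fun i hi _ _ _ => Or.inl (hp₀ i hi),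
    ← h, mul_comm, mul_assoc, ENNReal.mul_inv_cancel (Finset.prod_ne_zero_iff.2 hp₀)
      (ENNReal.prod_ne_top hp), mul_one]

section Atoms

variable {Ω : Type*}

theorem preimage_singleton_subset_or_disjoint {β : Type*} [MeasurableSpace β] (Y : Ω → β)
    (y : β) {t : Set Ω} (ht : MeasurableSet[MeasurableSpace.comap Y ‹_›] t) :
    Y ⁻¹' {y} ⊆ t ∨ Disjoint (Y ⁻¹' {y}) t := by
  obtain ⟨B, -, rfl⟩ := ht
  by_cases hy : y ∈ B
  · exact Or.inl (preimage_mono (singleton_subset_iff.2 hy))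
  · exact Or.inr ((disjoint_singleton_left.2 hy).preimage Y)

theorem Measurable.eq_of_mem_atom {m : MeasurableSpace Ω} {β : Type*} [MeasurableSpace β]
    [MeasurableSingletonClass β] {f : Ω → β} (hf : Measurable[m] f) {c : Set Ω}
    (hc : ∀ t, MeasurableSet[m] t → c ⊆ t ∨ Disjoint c t) {ω ω' : Ω} (hω : ω ∈ c)
    (hω' : ω' ∈ c) : f ω' = f ω := by
  rcases hc _ (hf (measurableSet_singleton (f ω))) with h | h
  · exact h hω'
  · exact absurd rfl (disjoint_left.1 h hω)

variable {m mΩ : MeasurableSpace Ω} {P : Measure Ω} [IsFiniteMeasure P] {c : Set Ω}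

theorem condExp_indicator_mul_measure_of_mem_atom (hm : m ≤ mΩ) (hcm : MeasurableSet[m] c)
    (hc : ∀ t, MeasurableSet[m] t → c ⊆ t ∨ Disjoint c t) {s : Set Ω} (hs : MeasurableSet s)
    {ω : Ω} (hω : ω ∈ c) : (P⟦s | m⟧) ω * P.real c = P.real (s ∩ c) := by
  have hconst : EqOn (P⟦s | m⟧) (fun _ => (P⟦s | m⟧) ω) c := fun ω' hω' =>
    stronglyMeasurable_condExp.measurable.eq_of_mem_atom hc hω hω'
  calc (P⟦s | m⟧) ω * P.real c = ∫ ω' in c, (P⟦s | m⟧) ω' ∂P := by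
        rw [setIntegral_congr_fun (hm c hcm) hconst, setIntegral_const, smul_eq_mul, mul_comm]
    _ = ∫ ω' in c, s.indicator (fun _ => (1 : ℝ)) ω' ∂P :=
        setIntegral_condExp hm ((integrable_const 1).indicator hs) hcm
    _ = P.real (s ∩ c) := by
        rw [integral_indicator_const _ hs, measureReal_restrict_apply hs, smul_eq_mul, mul_one]

theorem CondIndep.measure_inter_mul_of_atom [StandardBorelSpace Ω] {m₁ m₂ : MeasurableSpace Ω}
    {hm : m ≤ mΩ} (h : CondIndep m m₁ m₂ hm P) (hm₁ : m₁ ≤ mΩ) (hm₂ : m₂ ≤ mΩ) {a b : Set Ω}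
    (ha : MeasurableSet[m₁] a) (hb : MeasurableSet[m₂] b) (hcm : MeasurableSet[m] c)
    (hc : ∀ t, MeasurableSet[m] t → c ⊆ t ∨ Disjoint c t) :
    P (a ∩ b ∩ c) * P c = P (a ∩ c) * P (b ∩ c) := by
  rcases eq_or_ne (P c) 0 with hPc | hPc
  · simp [hPc, measure_inter_null_of_null_right]
  have hfac := (condIndep_iff m m₁ m₂ hm hm₁ hm₂ P).1 h a b ha hb
  have : (ae (P.restrict c)).NeBot := ae_neBot.2 (by rwa [Ne, Measure.restrict_eq_zero])
  obtain ⟨ω, hωc, hω⟩ := ((ae_restrict_mem (hm c hcm)).and (ae_restrict_of_ae hfac)).exists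
  have key {s : Set Ω} (hs : MeasurableSet[mΩ] s) :=
    condExp_indicator_mul_measure_of_mem_atom (P := P) hm hcm hc hs hωc
  rw [← ENNReal.toReal_eq_toReal_iff' (by finiteness) (by finiteness), ENNReal.toReal_mul,
    ENNReal.toReal_mul, ← measureReal_def, ← measureReal_def, ← measureReal_def,
    ← measureReal_def, ← key ((hm₁ a ha).inter (hm₂ b hb)), ← key (hm₁ a ha), ← key (hm₂ b hb),
    hω, Pi.mul_apply]
  ring

end Atoms

namespace CFS

variable {V Ω Val : Type*} [MeasurableSpace Val]

theorem famSigma_le_comap (X : V → Ω → Val) (S : Set V) :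
    famSigma X S ≤ MeasurableSpace.comap (fun ω (v : S) => X v ω) MeasurableSpace.pi :=
  iSup₂_le fun v hv => Measurable.comap_le (f := X v) <|
    (measurable_pi_apply (X := fun _ : S => Val) ⟨v, hv⟩).comp (comap_measurable _)

theorem biInter_preimage_subset_or_disjoint (X : V → Ω → Val) (S : Set V) (x : V → Val)
    {t : Set Ω} (ht : MeasurableSet[famSigma X S] t) :
    (⋂ u ∈ S, X u ⁻¹' {x u}) ⊆ t ∨ Disjoint (⋂ u ∈ S, X u ⁻¹' {x u}) t := by
  have hc : (⋂ u ∈ S, X u ⁻¹' {x u}) = (fun ω (v : S) => X v ω) ⁻¹' {fun v : S => x v} := by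
    ext ω
    simp [funext_iff]
  rw [hc]
  exact preimage_singleton_subset_or_disjoint _ _ (famSigma_le_comap X S t ht)

theorem measurableSet_famSigma_preimage {X : V → Ω → Val} {A : Set V} {v : V} (hv : v ∈ A)
    {B : Set Val} (hB : MeasurableSet B) : MeasurableSet[famSigma X A] (X v ⁻¹' B) :=
  le_iSup₂ (f := fun u (_ : u ∈ A) => MeasurableSpace.comap (X u) inferInstance) v hv _
    ⟨B, hB, rfl⟩

theorem measurableSet_famSigma_biInter [Countable V] [MeasurableSingletonClass Val]
    {X : V → Ω → Val} {A S : Set V} (hSA : S ⊆ A) (x : V → Val) :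
    MeasurableSet[famSigma X A] (⋂ u ∈ S, X u ⁻¹' {x u}) :=
  MeasurableSet.biInter (to_countable S) fun _ hu =>
    measurableSet_famSigma_preimage (hSA hu) (measurableSet_singleton _)

theorem Acyclic.exists_mem_forall_notMem_desc [Finite V] {E : V → V → Prop} (hE : Acyclic E)
    {s : Finset V} (hs : s.Nonempty) : ∃ v ∈ s, ∀ w ∈ s, w ∉ Desc E v := by
  have : IsTrans V fun a b => Relation.TransGen E b a := ⟨fun _ _ _ h₁ h₂ => h₂.trans h₁⟩
  have : Std.Irrefl fun a b : V => Relation.TransGen E b a := ⟨hE⟩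
  obtain ⟨v, hv, hmin⟩ :=
    (Finite.wellFounded_of_trans_of_irrefl fun a b => Relation.TransGen E b a).has_min s hs
  exact ⟨v, hv, hmin⟩

variable [mΩ : MeasurableSpace Ω] [Countable V] [MeasurableSingletonClass Val]
  [StandardBorelSpace Ω] {X : V → Ω → Val} {hX : ∀ v, Measurable (X v)} {P : Measure Ω}

theorem CondIndepFam.measure_inter_mul [IsFiniteMeasure P] {S A B : Set V}
    (h : CondIndepFam X hX P S A B) (x : V → Val) {a b : Set Ω} (ha : MeasurableSet[famSigma X A] a)
    (hb : MeasurableSet[famSigma X B] b) :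
    P (a ∩ b ∩ ⋂ u ∈ S, X u ⁻¹' {x u}) * P (⋂ u ∈ S, X u ⁻¹' {x u}) =
      P (a ∩ ⋂ u ∈ S, X u ⁻¹' {x u}) * P (b ∩ ⋂ u ∈ S, X u ⁻¹' {x u}) :=
  CondIndep.measure_inter_mul_of_atom h (famSigma_le hX A) (famSigma_le hX B) ha hb
    (measurableSet_famSigma_biInter subset_rfl x) fun _ =>
      biInter_preimage_subset_or_disjoint X S x

theorem MarkovCondition.measure_inter_mul_measure_parents [IsFiniteMeasure P]
    {E : V → V → Prop} (hMarkov : MarkovCondition E X hX P) (x : V → Val) {v : V}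
    {T : Finset V} (hvT : v ∉ T) (hTv : ∀ w ∈ T, w ∉ Desc E v) (hPaT : Pa E v ⊆ T) :
    P (X v ⁻¹' {x v} ∩ ⋂ w ∈ T, X w ⁻¹' {x w}) * P (⋂ u ∈ Pa E v, X u ⁻¹' {x u}) =
      P (X v ⁻¹' {x v} ∩ ⋂ u ∈ Pa E v, X u ⁻¹' {x u}) * P (⋂ w ∈ T, X w ⁻¹' {x w}) := by
  have hT : (⋂ w ∈ T, X w ⁻¹' {x w}) =
      (⋂ w ∈ (↑T \ Pa E v : Set V), X w ⁻¹' {x w}) ∩ ⋂ u ∈ Pa E v, X u ⁻¹' {x u} := by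
    rw [← biInter_union, sdiff_union_of_subset hPaT, Finset.set_biInter_coe]
  have hnd : (↑T \ Pa E v : Set V) ⊆ univ \ ({v} ∪ Desc E v ∪ Pa E v) := by
    rintro w ⟨hwT, hwPa⟩
    refine ⟨trivial, ?_⟩
    rintro ((rfl | hwD) | hwPa')
    exacts [hvT hwT, hTv w hwT hwD, hwPa hwPa']
  rw [hT, ← inter_assoc]
  exact (hMarkov v).measure_inter_mul x
    (measurableSet_famSigma_preimage (mem_singleton v) (measurableSet_singleton _))
    (measurableSet_famSigma_biInter hnd x)

theorem MarkovCondition.measure_mul_prod_of_parents_subset [IsProbabilityMeasure P] [Finite V]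
    {E : V → V → Prop} (hMarkov : MarkovCondition E X hX P) (hE : Acyclic E) (x : V → Val)
    (s : Finset V) (hs : ∀ v ∈ s, Pa E v ⊆ s) :
    P (⋂ v ∈ s, X v ⁻¹' {x v}) * ∏ v ∈ s, P (⋂ u ∈ Pa E v, X u ⁻¹' {x u}) =
      ∏ v ∈ s, P (X v ⁻¹' {x v} ∩ ⋂ u ∈ Pa E v, X u ⁻¹' {x u}) := by
  classical
  induction s using Finset.strongInduction with
  | H s ih =>
    rcases s.eq_empty_or_nonempty with rfl | hne
    · simp
    obtain ⟨v, hvs, hsink⟩ := hE.exists_mem_forall_notMem_desc hne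
    have hPa : Pa E v ⊆ s.erase v := fun u hu =>
      Finset.mem_erase.2 ⟨fun huv => hE v (.single (huv ▸ hu)), hs v hvs hu⟩
    have hs' : ∀ w ∈ s.erase v, Pa E w ⊆ s.erase v := fun w hw u hu =>
      Finset.mem_erase.2 ⟨fun huv => hsink w (Finset.mem_of_mem_erase hw) (.single (huv ▸ hu)),
        hs w (Finset.mem_of_mem_erase hw) hu⟩
    have hstep := hMarkov.measure_inter_mul_measure_parents x (Finset.notMem_erase v s)
      (fun w hw => hsink w (Finset.mem_of_mem_erase hw)) hPa
    rw [← Finset.insert_erase hvs, Finset.set_biInter_insert, Finset.prod_insert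
      (Finset.notMem_erase v s), Finset.prod_insert (Finset.notMem_erase v s), ← mul_assoc,
      hstep, mul_assoc, ih _ (Finset.erase_ssubset hvs) hs']

end CFS

theorem stmt_0_general
    {V Ω Val : Type*} [Fintype V] [MeasurableSpace Ω] [StandardBorelSpace Ω]
    [MeasurableSpace Val] [DiscreteMeasurableSpace Val]
    (E : V → V → Prop) (hE : Acyclic E)
    (X : V → Ω → Val) (hX : ∀ v, Measurable (X v))
    (P : MeasureTheory.Measure Ω) [MeasureTheory.IsProbabilityMeasure P]
    (hMarkov : MarkovCondition E X hX P)
    (x : V → Val) :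
    (P (⋂ v, X v ⁻¹' {x v}) * ∏ v, P (⋂ u ∈ Pa E v, X u ⁻¹' {x u}) =
      ∏ v, P (X v ⁻¹' {x v} ∩ ⋂ u ∈ Pa E v, X u ⁻¹' {x u})) ∧
    ((∀ v, 0 < P (⋂ u ∈ Pa E v, X u ⁻¹' {x u})) →
      P (⋂ v, X v ⁻¹' {x v}) =
        ∏ v, ProbabilityTheory.cond P (⋂ u ∈ Pa E v, X u ⁻¹' {x u}) (X v ⁻¹' {x v})) := by
  have hfac := hMarkov.measure_mul_prod_of_parents_subset hE x Finset.univ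
    fun _ _ _ _ => Finset.mem_coe.2 (Finset.mem_univ _)
  simp only [Finset.mem_univ, iInter_true] at hfac
  refine ⟨hfac, fun hpos => ?_⟩
  have hPa (v : V) : MeasurableSet (⋂ u ∈ Pa E v, X u ⁻¹' {x u}) :=
    .biInter (to_countable _) fun u _ => hX u (measurableSet_singleton _)
  simp only [cond_apply (hPa _), inter_comm (⋂ u ∈ Pa E _, X u ⁻¹' {x u})]
  exact ENNReal.eq_prod_inv_mul_of_mul_prod_eq (fun v _ => (hpos v).ne')
    (fun _ _ => measure_ne_top _ _) hfac

/-- A family of random variables satisfying the Markov condition w.r.t. a DAG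
factorizes according to the DAG. -/
theorem stmt_0
    {V Ω Val : Type*} [Fintype V] [MeasurableSpace Ω] [StandardBorelSpace Ω]
    [MeasurableSpace Val] [DiscreteMeasurableSpace Val] [Fintype Val] [Nonempty Val]
    (E : V → V → Prop) (hE : Acyclic E)
    (X : V → Ω → Val) (hX : ∀ v, Measurable (X v))
    (P : MeasureTheory.Measure Ω) [MeasureTheory.IsProbabilityMeasure P]
    (hMarkov : MarkovCondition E X hX P)
    (x : V → Val) :
    (P (⋂ v, X v ⁻¹' {x v}) * ∏ v, P (⋂ u ∈ Pa E v, X u ⁻¹' {x u}) =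
      ∏ v, P (X v ⁻¹' {x v} ∩ ⋂ u ∈ Pa E v, X u ⁻¹' {x u})) ∧
    ((∀ v, 0 < P (⋂ u ∈ Pa E v, X u ⁻¹' {x u})) →
      P (⋂ v, X v ⁻¹' {x v}) =
        ∏ v, ProbabilityTheory.cond P (⋂ u ∈ Pa E v, X u ⁻¹' {x u}) (X v ⁻¹' {x v})) :=
  stmt_0_general E hE X hX P hMarkov x
end

section
/- Let V be a finite set, G a directed acyclic graph on V, and (X_v)_{v∈V} a family of random variables on a probability space (Ω, 𝓕, P), each valued in a nonempty finite type, whose distribution is faithful to G. Then for every X ∈ V the Markov boundary of X is unique and equals mb(X) = Pa(X) ∪ Ch(X) ∪ Sp(X): the set mb(X) is a Markov boundary of X, and every Markov boundary of X equals mb(X). -/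
open MeasureTheory ProbabilityTheory Set

open CFS

section Aux

open CFS

variable {V Ω Val : Type*} [mΩ : MeasurableSpace Ω] [StandardBorelSpace Ω] [MeasurableSpace Val]

omit [StandardBorelSpace Ω] in
lemma famSigma_empty_aux (X : V → Ω → Val) : famSigma X (∅ : Set V) = ⊥ := by
  simp [famSigma]

lemma condIndepFam_empty_right_aux (X : V → Ω → Val) (hX : ∀ v, Measurable (X v))
    (P : MeasureTheory.Measure Ω) [MeasureTheory.IsFiniteMeasure P] (S A : Set V) :
    CondIndepFam X hX P S A ∅ := by
  unfold CondIndepFam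
  rw [famSigma_empty_aux]
  exact ProbabilityTheory.condIndep_bot_right _

lemma notMem_mb_self_aux {E : V → V → Prop} (hE : Acyclic E) (C : V) : C ∉ mb E C := by
  rintro ((h | h) | ⟨hne, w, h1, h2⟩)
  · exact hE C (Relation.TransGen.single h)
  · exact hE C (Relation.TransGen.single h)
  · exact hne rfl

lemma mem_mb_ne_aux {E : V → V → Prop} (hE : Acyclic E) {C v : V} (hv : v ∈ mb E C) :
    v ≠ C := ne_of_mem_of_not_mem hv (notMem_mb_self_aux hE C)

/-- The three-vertex path `a, b, c`. -/
def path3 (a b c : V) : ℕ → V := fun t => if t = 0 then a else if t = 1 then b else c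

lemma path3_zero (a b c : V) : path3 a b c 0 = a := rfl
lemma path3_one (a b c : V) : path3 a b c 1 = b := rfl
lemma path3_two (a b c : V) : path3 a b c 2 = c := rfl

lemma not_dsep_adj_aux {E : V → V → Prop} {i j : V} (hij : i ≠ j) (h : Adj E i j)
    (S : Set V) : ¬ DSep E i j S := by
  intro hd
  obtain ⟨t, ht0, ht1, -⟩ := hd 1 (fun t => if t = 0 then i else j)
    { pos := one_pos
      start := by simp
      finish := by simp
      inj := by
        intro s hs t ht hst
        interval_cases s <;> interval_cases t <;> simp_all
      adj := by
        intro t ht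
        interval_cases t
        simpa using h }
  omega

/-- `C` is d-separated by `mb E C` from everything outside `mb E C ∪ {C}`. -/
lemma dsepset_mb_aux {E : V → V → Prop} (hE : Acyclic E) (C : V) :
    DSepSet E {C} (Set.univ \ (mb E C ∪ {C})) (mb E C) := by
  intro i hi j hj n f p
  rw [Set.mem_singleton_iff] at hi
  rw [hi] at p
  have hj' : j ∉ mb E C ∪ {C} := hj.2
  have hadj0 : Adj E (f 0) (f 1) := p.adj 0 p.pos
  rw [p.start] at hadj0
  have h1mb : f 1 ∈ mb E C := by
    rcases hadj0 with h | h
    · exact Or.inl (Or.inr h)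
    · exact Or.inl (Or.inl h)
  have hn1 : 1 < n := by
    rcases Nat.lt_or_ge 1 n with h | h
    · exact h
    · exfalso
      have hn : n = 1 := le_antisymm h p.pos
      apply hj'
      exact Or.inl (by rw [← p.finish, hn]; exact h1mb)
  by_cases hc : ColliderAt E f 1
  · -- f 1 is a collider, so E C (f 1) and E (f 2) (f 1); f 2 is a spouse of C
    have e1 : E C (f 1) := by
      have := hc.1
      rwa [show (1 : ℕ) - 1 = 0 from rfl, p.start] at this
    have e2 : E (f 2) (f 1) := hc.2
    have h2C : f 2 ≠ C := by
      intro h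
      have := p.inj 2 hn1 0 (Nat.zero_le n) (by rw [p.start, h])
      omega
    have h2mb : f 2 ∈ mb E C := Or.inr ⟨h2C, f 1, e2, e1⟩
    have hn2 : 2 < n := by
      rcases Nat.lt_or_ge 2 n with h | h
      · exact h
      · exfalso
        have hn : n = 2 := le_antisymm h hn1
        apply hj'
        exact Or.inl (by rw [← p.finish, hn]; exact h2mb)
    refine ⟨2, by omega, hn2, Or.inl ⟨?_, h2mb⟩⟩
    intro hc2
    have e12 : E (f 1) (f 2) := by
      have := hc2.1
      rwa [show (2 : ℕ) - 1 = 1 from rfl] at this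
    exact hE (f 1) (Relation.TransGen.head e12 (Relation.TransGen.single e2))
  · exact ⟨1, one_pos, hn1, Or.inl ⟨hc, h1mb⟩⟩

/-- If some member of `mb E C` is missing from `M`, then `M` does not d-separate `C`
from the rest of the graph. -/
lemma not_dsepset_of_mem_mb_aux {E : V → V → Prop} (hE : Acyclic E) {C v : V} {M : Set V}
    (hv : v ∈ mb E C) (hvM : v ∉ M) :
    ¬ DSepSet E {C} (Set.univ \ (M ∪ {C})) M := by
  intro hd
  have hvC : v ≠ C := mem_mb_ne_aux hE hv
  have hvB : v ∈ Set.univ \ (M ∪ {C}) := ⟨trivial, by simp [hvM, hvC]⟩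
  rcases hv with (hp | hc) | ⟨-, w, hvw, hCw⟩
  · exact not_dsep_adj_aux hvC.symm (Or.inr hp) M (hd C rfl v hvB)
  · exact not_dsep_adj_aux hvC.symm (Or.inl hc) M (hd C rfl v hvB)
  · have hwC : w ≠ C := by
      intro h
      exact hE C (Relation.TransGen.single (h ▸ hCw))
    have hwv : w ≠ v := by
      intro h
      exact hE v (Relation.TransGen.single (h ▸ hvw))
    by_cases hwM : w ∈ M
    · -- the path C → w ← v is an unblocked collider path
      have hp : IsUPath E C v 2 (path3 C w v) := by
        refine ⟨two_pos, rfl, rfl, ?_, ?_⟩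
        · intro s hs t ht hst
          interval_cases s <;> interval_cases t <;> simp_all [path3, hvC, hwC, hwv]
        · intro t ht
          interval_cases t
          · exact Or.inl (by simpa [path3] using hCw)
          · exact Or.inr (by simpa [path3] using hvw)
      obtain ⟨t, ht0, ht2, hcase⟩ := hd C rfl v hvB 2 (path3 C w v) hp
      have ht : t = 1 := by omega
      subst ht
      have hcol : ColliderAt E (path3 C w v) 1 := by
        constructor
        · simpa [path3] using hCw
        · simpa [path3] using hvw
      rcases hcase with ⟨hnc, -⟩ | ⟨-, hns, -⟩
      · exact hnc hcol
      · exact hns (by simpa [path3] using hwM)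
    · have hwB : w ∈ Set.univ \ (M ∪ {C}) := ⟨trivial, by simp [hwM, hwC]⟩
      exact not_dsep_adj_aux hwC.symm (Or.inl hCw) M (hd C rfl w hwB)

end Aux

/-- Under faithfulness, the Markov boundary of `C` is unique and equals
`mb(C) = Pa(C) ∪ Ch(C) ∪ Sp(C)`. -/
theorem stmt_2
    {V Ω Val : Type*} [Fintype V] [MeasurableSpace Ω] [StandardBorelSpace Ω]
    [MeasurableSpace Val] [DiscreteMeasurableSpace Val] [Fintype Val] [Nonempty Val]
    (E : V → V → Prop) (hE : Acyclic E)
    (X : V → Ω → Val) (hX : ∀ v, Measurable (X v))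
    (P : MeasureTheory.Measure Ω) [MeasureTheory.IsProbabilityMeasure P]
    (hF : Faithful E X hX P)
    (C : V) :
    IsMarkovBoundary X hX P C (mb E C) ∧
    ∀ M : Set V, IsMarkovBoundary X hX P C M → M = mb E C := by

  classical
  have hCmb : C ∉ mb E C := notMem_mb_self_aux hE C
  -- mb E C is a Markov blanket
  have hbl : IsMarkovBlanket X hX P C (mb E C) := by
    refine ⟨hCmb, ?_⟩
    rcases Set.eq_empty_or_nonempty (Set.univ \ (mb E C ∪ {C})) with hB | hB
    · rw [hB]
      exact condIndepFam_empty_right_aux X hX P _ _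
    · refine (hF {C} (Set.univ \ (mb E C ∪ {C})) (mb E C) (Set.singleton_nonempty C) hB
        ?_ ?_ ?_).mpr (dsepset_mb_aux hE C)
      · rw [Set.disjoint_singleton_left]
        intro h
        exact h.2 (Or.inr rfl)
      · rw [Set.disjoint_singleton_left]
        exact hCmb
      · rw [Set.disjoint_left]
        intro x hx hx'
        exact hx.2 (Or.inl hx')
  -- any Markov blanket contains mb E C
  have key : ∀ M : Set V, IsMarkovBlanket X hX P C M → mb E C ⊆ M := by
    intro M hM v hv
    by_contra hvM
    have hvC : v ≠ C := mem_mb_ne_aux hE hv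
    have hvB : v ∈ Set.univ \ (M ∪ {C}) := ⟨trivial, by simp [hvM, hvC]⟩
    have hd : DSepSet E {C} (Set.univ \ (M ∪ {C})) M := by
      refine (hF {C} (Set.univ \ (M ∪ {C})) M (Set.singleton_nonempty C) ⟨v, hvB⟩
        ?_ ?_ ?_).mp hM.2
      · rw [Set.disjoint_singleton_left]
        intro h
        exact h.2 (Or.inr rfl)
      · rw [Set.disjoint_singleton_left]
        exact hM.1
      · rw [Set.disjoint_left]
        intro x hx hx'
        exact hx.2 (Or.inl hx')
    exact not_dsepset_of_mem_mb_aux hE hv hvM hd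
  refine ⟨⟨hbl, ?_⟩, ?_⟩
  · intro M' hM' hbl'
    exact hM'.2 (key M' hbl')
  · rintro M ⟨hMbl, hMmin⟩
    have h1 : mb E C ⊆ M := key M hMbl
    by_contra hne
    exact hMmin (mb E C) (h1.ssubset_of_ne fun h => hne h.symm) hbl
end

section
/- Let V be a finite set, G a directed acyclic graph on V, and (X_v)_{v∈V} a family of random variables on a probability space (Ω, 𝓕, P), each valued in a nonempty finite type, whose distribution is faithful to G. Suppose V_i is adjacent to V_j in G, V_j is adjacent to V_k, and V_i is not adjacent to V_k (adjacency meaning an edge in either direction). If there exists S ⊆ V \ {V_i, V_j, V_k} such that X_{V_i} and X_{V_k} are conditionally independent given (X_s)_{s∈S} but NOT conditionally independent given (X_s)_{s∈S∪{V_j}}, then the edges are oriented as V_i → V_j and V_k → V_j; in particular V_i is a spouse of V_k with common child V_j. -/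
open MeasureTheory ProbabilityTheory Set

open CFS

/-- Under faithfulness: if `i - j - k` with `i, k` non-adjacent, and `X i ⟂ X k | S`
but `X i ⟂̸ X k | S ∪ {j}` for some `S` avoiding `i, j, k`, then `i → j ← k`;
in particular `i` is a spouse of `k` with common child `j`. -/
theorem stmt_4
    {V Ω Val : Type*} [Fintype V] [MeasurableSpace Ω] [StandardBorelSpace Ω]
    [MeasurableSpace Val] [DiscreteMeasurableSpace Val] [Fintype Val] [Nonempty Val]
    (E : V → V → Prop) (hE : Acyclic E)
    (X : V → Ω → Val) (hX : ∀ v, Measurable (X v))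
    (P : MeasureTheory.Measure Ω) [MeasureTheory.IsProbabilityMeasure P]
    (hF : Faithful E X hX P)
    {i j k : V} (hij : i ≠ j) (hjk : j ≠ k) (hik : i ≠ k)
    (hadj_ij : Adj E i j) (hadj_jk : Adj E j k) (hnadj_ik : ¬ Adj E i k)
    {S : Set V} (hiS : i ∉ S) (hjS : j ∉ S) (hkS : k ∉ S)
    (h1 : CondIndepFam X hX P S {i} {k})
    (h2 : ¬ CondIndepFam X hX P (S ∪ {j}) {i} {k}) :
    E i j ∧ E k j ∧ i ∈ Sp E k := by
  have hds : DSep E i k S := by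
    have := (hF {i} {k} S ⟨i, rfl⟩ ⟨k, rfl⟩
      (by simp [Set.disjoint_left, hik])
      (by simp [Set.disjoint_left, hiS])
      (by simp [Set.disjoint_left, hkS])).mp h1
    exact this i rfl k rfl
  set f : ℕ → V := fun t => if t = 0 then i else if t = 1 then j else k with hf
  have hpath : IsUPath E i k 2 f := by
    constructor
    · norm_num
    · simp [hf]
    · simp [hf]
    · intro s hs t ht hst
      interval_cases s <;> interval_cases t <;> simp_all [hf] <;> tauto
    · intro t ht
      interval_cases t
      · simpa [hf] using hadj_ij
      · simpa [hf] using hadj_jk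
  obtain ⟨t, ht0, ht2, hcase⟩ := hds 2 f hpath
  have ht1 : t = 1 := by omega
  subst ht1
  have hf1 : f 1 = j := by simp [hf]
  rcases hcase with ⟨_, hmem⟩ | ⟨hcol, _, _⟩
  · exact absurd (hf1 ▸ hmem) hjS
  · have h1 : E i j := by simpa [hf] using hcol.1
    have h2 : E k j := by simpa [hf] using hcol.2
    exact ⟨h1, h2, hik, j, h1, h2⟩
end

section
/- Let G be a directed acyclic graph on a finite vertex set V, and for a vertex X let mb(X) = Pa(X) ∪ Ch(X) ∪ Sp(X). Then for every vertex Y ∈ V \ (mb(X) ∪ {X}), the vertices X and Y are d-separated by mb(X) in G. -/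
open MeasureTheory ProbabilityTheory Set

open CFS

/-- In a DAG, `mb(X) = Pa(X) ∪ Ch(X) ∪ Sp(X)` d-separates `X` from every other vertex
outside `mb(X) ∪ {X}`. -/
theorem stmt_6
    {V : Type*} [Fintype V] (E : V → V → Prop) (hE : Acyclic E) (X : V) :
    ∀ Y, Y ≠ X → Y ∉ mb E X → DSep E X Y (mb E X) := by
  intro Y hYX hYmb n f hp
  have h0 : f 0 = X := hp.start
  have hn : f n = Y := hp.finish
  have hf1 : f 1 ∈ mb E X := by
    have h := hp.adj 0 hp.pos
    rw [h0] at h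
    rcases h with h | h
    · exact Or.inl (Or.inr h)
    · exact Or.inl (Or.inl h)
  have hn2 : 2 ≤ n := by
    by_contra hlt
    have hpos := hp.pos
    have hn1 : n = 1 := by omega
    subst hn1
    exact hYmb (hn ▸ hf1)
  by_cases hc : ColliderAt E f 1
  · have hE21 : E (f 2) (f 1) := hc.2
    have hE01 : E (f 0) (f 1) := hc.1
    have h2X : f 2 ≠ X := by
      intro h
      have : (2 : ℕ) = 0 := hp.inj 2 hn2 0 (Nat.zero_le n) (by rw [h, h0])
      omega
    have hf2 : f 2 ∈ mb E X := Or.inr ⟨h2X, f 1, hE21, h0 ▸ hE01⟩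
    have h2n : 2 < n := by
      rcases lt_or_eq_of_le hn2 with h | h
      · exact h
      · exfalso
        apply hYmb
        have hf2Y : f 2 = Y := by rw [h, hn]
        exact hf2Y ▸ hf2
    refine ⟨2, by omega, h2n, Or.inl ⟨?_, hf2⟩⟩
    intro hc2
    exact hE (f 1) (Relation.TransGen.head hc2.1 (Relation.TransGen.single hE21))
  · have h1n : 1 < n := by omega
    exact ⟨1, one_pos, h1n, Or.inl ⟨hc, hf1⟩⟩
end

section
/- Let G be a directed acyclic graph on a finite vertex set V, and let i, j, k be distinct vertices such that i is adjacent to j, j is adjacent to k, and i is not adjacent to k (adjacency meaning an edge in either direction). If there exists a subset S ⊆ V \ {i, j, k} such that i and k are d-separated by S in G, then the edges are oriented as i → j and k → j (i.e., j is a common child of i and k). -/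
open MeasureTheory ProbabilityTheory Set

open CFS

/-- Collider orientation: if `i - j - k` with `i, k` distinct and non-adjacent, and some
`S ⊆ V \ {i, j, k}` d-separates `i` from `k`, then `i → j ← k`. -/
theorem stmt_7
    {V : Type*} [Fintype V] (E : V → V → Prop) (hE : Acyclic E)
    {i j k : V} (hij : i ≠ j) (hjk : j ≠ k) (hik : i ≠ k)
    (hadj_ij : Adj E i j) (hadj_jk : Adj E j k) (hnadj_ik : ¬ Adj E i k)
    {S : Set V} (hiS : i ∉ S) (hjS : j ∉ S) (hkS : k ∉ S)
    (hsep : DSep E i k S) :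
    E i j ∧ E k j := by
  set f : ℕ → V := fun t => if t = 0 then i else if t = 1 then j else k with hf
  have hpath : IsUPath E i k 2 f := by
    refine ⟨by norm_num, rfl, rfl, ?_, ?_⟩
    · intro s hs t ht hst
      interval_cases s <;> interval_cases t <;> simp_all [hf] <;> tauto
    · intro t ht
      interval_cases t
      · simpa [hf] using hadj_ij
      · simpa [hf] using hadj_jk
  obtain ⟨t, ht0, ht2, hcase⟩ := hsep 2 f hpath
  have ht1 : t = 1 := by omega
  subst ht1
  rcases hcase with ⟨_, hmem⟩ | ⟨hcol, _⟩
  · exact absurd (by simpa [hf] using hmem) hjS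
  · exact ⟨by simpa [hf] using hcol.1, by simpa [hf] using hcol.2⟩
end

section
/- Let G be a directed acyclic graph on a finite vertex set V and let X ∈ V. If a subset S ⊆ V \ {X} d-separates X from every vertex in V \ (S ∪ {X}), then mb(X) = Pa(X) ∪ Ch(X) ∪ Sp(X) is contained in S. Consequently, mb(X) is the unique minimal subset S ⊆ V \ {X} that d-separates X from every vertex outside S ∪ {X}. -/
open MeasureTheory ProbabilityTheory Set

/-!
Every vertex adjacent to `X` is a path of length one, which no set can block, so a separating
set must contain the parents and children of `X`. For a spouse `Y` with common child `w`, the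
path `X → w ← Y` is unblocked once `w ∈ S`, and `w` must be in `S` as a child of `X`.
Conversely, a path leaving `X` is blocked by `mb(X)` at its first vertex unless that vertex is a
child entered as a collider; then the next vertex is a spouse, and there the path leaves through
an outgoing edge, so it is a non-collider in `mb(X)`. Being itself such a set and contained in every other one,
`mb(X)` is the unique minimal one.
-/

namespace CFS

variable {V : Type*} {E : V → V → Prop}

theorem Acyclic.irrefl (hE : Acyclic E) (v : V) : ¬ E v v :=
  fun h => hE v (.single h)

theorem Acyclic.asymm (hE : Acyclic E) {u v : V} (h : E u v) : ¬ E v u :=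
  fun h' => hE u ((Relation.TransGen.single h).tail h')

theorem isUPath_pair {i j : V} (hij : i ≠ j) (h : Adj E i j) :
    IsUPath E i j 1 (fun t => if t = 0 then i else j) := by
  refine ⟨one_pos, rfl, rfl, ?_, ?_⟩
  · intro s hs t ht hst
    interval_cases s <;> interval_cases t <;> simp_all
  · intro t ht
    interval_cases t
    simpa using h

theorem isUPath_triple {i w j : V} (hiw : i ≠ w) (hij : i ≠ j) (hwj : w ≠ j)
    (hi : Adj E i w) (hj : Adj E w j) :
    IsUPath E i j 2 (fun t => if t = 0 then i else if t = 1 then w else j) := by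
  refine ⟨two_pos, rfl, rfl, ?_, ?_⟩
  · intro s hs t ht hst
    interval_cases s <;> interval_cases t <;> simp_all [eq_comm]
  · intro t ht
    interval_cases t <;> simpa

theorem not_dSep_of_adj {i j : V} {S : Set V} (hij : i ≠ j) (h : Adj E i j) :
    ¬ DSep E i j S := fun hsep => by
  obtain ⟨t, ht0, ht1, -⟩ := hsep 1 _ (isUPath_pair hij h)
  omega

theorem not_dSep_of_collider_mem {i w j : V} {S : Set V} (hiw : i ≠ w) (hij : i ≠ j)
    (hwj : w ≠ j) (hi : E i w) (hj : E j w) (hw : w ∈ S) : ¬ DSep E i j S := fun hsep => by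
  obtain ⟨t, ht0, ht2, hb⟩ := hsep 2 _ (isUPath_triple hiw hij hwj (.inl hi) (.inr hj))
  obtain rfl : t = 1 := by omega
  have hcol : ColliderAt E (fun t => if t = 0 then i else if t = 1 then w else j) 1 :=
    ⟨hi, hj⟩
  rcases hb with ⟨hnc, -⟩ | ⟨-, hw', -⟩
  · exact hnc hcol
  · exact hw' hw

theorem not_mem_mb (hE : Acyclic E) (X : V) : X ∉ mb E X := by
  rintro ((h | h) | ⟨h, -⟩)
  · exact hE.irrefl X h
  · exact hE.irrefl X h
  · exact h rfl

theorem mem_mb_of_adj {X v : V} (h : Adj E X v) : v ∈ mb E X :=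
  h.elim (fun h => .inl (.inr h)) (fun h => .inl (.inl h))

/-- `S` is a Markov blanket of `X` in the graphical sense. -/
def IsDSepBlanket (E : V → V → Prop) (X : V) (S : Set V) : Prop :=
  X ∉ S ∧ ∀ Y, Y ≠ X → Y ∉ S → DSep E X Y S

theorem IsDSepBlanket.mb_subset (hE : Acyclic E) {X : V} {S : Set V}
    (hS : IsDSepBlanket E X S) : mb E X ⊆ S := by
  obtain ⟨hXS, hsep⟩ := hS
  have adj_mem {v : V} (hv : Adj E X v) : v ∈ S := by
    by_contra hvS
    have hvX : v ≠ X := by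
      rintro rfl
      exact not_mem_mb hE v (mem_mb_of_adj hv)
    exact not_dSep_of_adj hvX.symm hv (hsep v hvX hvS)
  rintro Y ((hPa | hCh) | ⟨hYX, w, hYw, hXw⟩)
  · exact adj_mem (.inr hPa)
  · exact adj_mem (.inl hCh)
  · by_contra hYS
    have hwS : w ∈ S := adj_mem (.inl hXw)
    have hXw' : X ≠ w := fun h => hXS (h ▸ hwS)
    have hwY : w ≠ Y := fun h => hE.irrefl Y (h ▸ hYw)
    exact not_dSep_of_collider_mem hXw' hYX.symm hwY hXw hYw hwS (hsep Y hYX hYS)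

theorem blocked_of_not_colliderAt_mem {S : Set V} {n t : ℕ} {f : ℕ → V} (ht0 : 0 < t)
    (htn : t < n) (hnc : ¬ ColliderAt E f t) (hS : f t ∈ S) : Blocked E S n f :=
  ⟨t, ht0, htn, .inl ⟨hnc, hS⟩⟩

theorem isDSepBlanket_mb (hE : Acyclic E) (X : V) : IsDSepBlanket E X (mb E X) := by
  refine ⟨not_mem_mb hE X, fun Y hYX hY n f hp => ?_⟩
  have hf1 : f 1 ∈ mb E X := mem_mb_of_adj (hp.start ▸ hp.adj 0 hp.pos)
  have hn1 : 1 < n := by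
    by_contra
    obtain rfl : n = 1 := by have := hp.pos; omega
    exact hY (hp.finish ▸ hf1)
  rcases hp.adj 0 hp.pos with hch | hpa
  · by_cases hcol : ColliderAt E f 1
    · have hf2X : f 2 ≠ X := fun h =>
        absurd (hp.inj 2 hn1 0 (Nat.zero_le n) (h.trans hp.start.symm)) (by omega)
      have hf2 : f 2 ∈ mb E X := .inr ⟨hf2X, f 1, hcol.2, hp.start ▸ hch⟩
      have hn2 : 2 < n := by
        by_contra
        obtain rfl : n = 2 := by omega
        exact hY (hp.finish ▸ hf2)
      exact blocked_of_not_colliderAt_mem two_pos hn2 (fun h => hE.asymm hcol.2 h.1) hf2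
    · exact blocked_of_not_colliderAt_mem one_pos hn1 hcol hf1
  · exact blocked_of_not_colliderAt_mem one_pos hn1 (fun h => hE.asymm hpa h.1) hf1

end CFS

open CFS

theorem stmt_8_general
    {V : Type*} (E : V → V → Prop) (hE : Acyclic E) (X : V) :
    (∀ S : Set V, X ∉ S → (∀ Y, Y ≠ X → Y ∉ S → DSep E X Y S) → mb E X ⊆ S) ∧
    (X ∉ mb E X ∧ ∀ Y, Y ≠ X → Y ∉ mb E X → DSep E X Y (mb E X)) ∧
    (∀ S : Set V, X ∉ S → (∀ Y, Y ≠ X → Y ∉ S → DSep E X Y S) →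
      (∀ S' ⊂ S, ¬ (X ∉ S' ∧ ∀ Y, Y ≠ X → Y ∉ S' → DSep E X Y S')) → S = mb E X) := by
  have mb_subset (S : Set V) (hXS : X ∉ S) (hsep : ∀ Y, Y ≠ X → Y ∉ S → DSep E X Y S) :
      mb E X ⊆ S :=
    IsDSepBlanket.mb_subset hE ⟨hXS, hsep⟩
  refine ⟨mb_subset, isDSepBlanket_mb hE X, fun S hXS hsep hmin => ?_⟩
  exact (eq_of_le_of_not_lt (mb_subset S hXS hsep)
    fun hlt => hmin _ hlt (isDSepBlanket_mb hE X)).symm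

/-- In a DAG, any `S ⊆ V \ {X}` d-separating `X` from all vertices outside `S ∪ {X}`
contains `mb(X)`; consequently `mb(X)` is the unique minimal such set. -/
theorem stmt_8
    {V : Type*} [Fintype V] (E : V → V → Prop) (hE : Acyclic E) (X : V) :
    (∀ S : Set V, X ∉ S → (∀ Y, Y ≠ X → Y ∉ S → DSep E X Y S) → mb E X ⊆ S) ∧
    (X ∉ mb E X ∧ ∀ Y, Y ≠ X → Y ∉ mb E X → DSep E X Y (mb E X)) ∧
    (∀ S : Set V, X ∉ S → (∀ Y, Y ≠ X → Y ∉ S → DSep E X Y S) →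
      (∀ S' ⊂ S, ¬ (X ∉ S' ∧ ∀ Y, Y ≠ X → Y ∉ S' → DSep E X Y S')) → S = mb E X) :=
  stmt_8_general E hE X
end

section
/- Let (X_v)_{v∈V} be a family of random variables on a probability space (Ω, 𝓕, P) indexed by a finite set V, each valued in a nonempty finite type, and let C ∈ V. If M ⊆ V \ {C} is a Markov blanket of C and a feature v ∈ V \ {C} is strongly relevant to C, then v ∈ M; equivalently, for every v ∈ V \ (M ∪ {C}), the variables X_C and X_v are conditionally independent given the family (X_w)_{w ∈ V \ {C, v}}. -/
open MeasureTheory ProbabilityTheory Set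

open CFS

/-! With `R = V \ (M ∪ {C, v})`, the blanket property reads `X_C ⊥ (X_v, X_R) | X_M`, and the
claim `X_C ⊥ X_v | (X_M, X_R)` is the weak union property of conditional independence.
If `𝓑` is conditionally independent of an event `A` given `𝓜`, then `P[A | 𝓜 ⊔ 𝓑] = P[A | 𝓜]`
(compare integrals over the π-system of sets `W ∩ B`). Taking `𝓑 = σ(X_v, X_R)` and
`𝓑 = σ(X_R)` gives `P[A | M, v, R] = P[A | M, R]` for events `A` of `X_C`; so for events `B`
of `X_v`, conditioning `1_A 1_B` first on `(M, v, R)` and then on `(M, R)` yields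
`P[A ∩ B | M, R] = P[A | M, R] P[B | M, R]`. -/

lemma Set.mul_indicator_one_eq {ι M₀ : Type*} [MulZeroOneClass M₀] (f : ι → M₀) (s : Set ι) :
    f * s.indicator 1 = s.indicator f := by
  funext x; by_cases hx : x ∈ s <;> simp [hx]

lemma MeasureTheory.setIntegral_eq_of_isPiSystem {Ω : Type*} [mΩ : MeasurableSpace Ω]
    {μ : Measure Ω} {m : MeasurableSpace Ω} {S : Set (Set Ω)}
    (hgen : m = MeasurableSpace.generateFrom S) (hS : IsPiSystem S) (hm : m ≤ mΩ)
    {f g : Ω → ℝ} (hf : Integrable f μ) (hg : Integrable g μ)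
    (huniv : ∫ x, f x ∂μ = ∫ x, g x ∂μ) (heq : ∀ s ∈ S, ∫ x in s, f x ∂μ = ∫ x in s, g x ∂μ)
    ⦃s : Set Ω⦄ (hs : MeasurableSet[m] s) : ∫ x in s, f x ∂μ = ∫ x in s, g x ∂μ := by
  induction s, hs using MeasurableSpace.induction_on_inter hgen hS with
  | empty => simp
  | basic s hs => exact heq s hs
  | compl t htm iht =>
    have hf' := integral_add_compl (hm _ htm) hf
    have hg' := integral_add_compl (hm _ htm) hg
    linarith
  | iUnion t hdisj htm iht =>
    rw [integral_iUnion (fun i => hm _ (htm i)) hdisj hf.integrableOn,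
      integral_iUnion (fun i => hm _ (htm i)) hdisj hg.integrableOn]
    exact tsum_congr iht

section CondIndep

variable {Ω : Type*} {m m₁ m₂ m₃ : MeasurableSpace Ω} [mΩ : MeasurableSpace Ω]
  {μ : Measure Ω} [IsFiniteMeasure μ] {A B : Set Ω}

lemma MeasureTheory.condExp_indicator_inter_ae_eq_mul {n n' : MeasurableSpace Ω} (hnn' : n ≤ n')
    (hn' : n' ≤ mΩ) (hA : MeasurableSet[mΩ] A) (hB : MeasurableSet[n'] B)
    (hAn : μ⟦A | n'⟧ =ᵐ[μ] μ⟦A | n⟧) :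
    μ⟦A ∩ B | n⟧ =ᵐ[μ] μ⟦A | n⟧ * μ⟦B | n⟧ := by
  have hB' : MeasurableSet[mΩ] B := hn' _ hB
  have hAB : Integrable (A.indicator 1 * B.indicator 1 : Ω → ℝ) μ := by
    rw [← Set.inter_indicator_one]; exact (integrable_const 1).indicator (hA.inter hB')
  calc μ⟦A ∩ B | n⟧
      =ᵐ[μ] μ[μ[A.indicator 1 * B.indicator 1 | n'] | n] := by
        rw [← Set.inter_indicator_one]; exact (condExp_condExp_of_le hnn' hn').symm
    _ =ᵐ[μ] μ[μ⟦A | n⟧ * B.indicator 1 | n] := by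
        refine condExp_congr_ae ?_
        filter_upwards [condExp_mul_of_stronglyMeasurable_right
          (stronglyMeasurable_const.indicator hB) hAB
          ((integrable_const 1).indicator hA), hAn] with x hx hxA
        exact hx.trans (congrArg (· * B.indicator 1 x) hxA)
    _ =ᵐ[μ] μ⟦A | n⟧ * μ⟦B | n⟧ := by
        refine condExp_mul_of_stronglyMeasurable_left stronglyMeasurable_condExp ?_
          ((integrable_const 1).indicator hB')
        rw [Set.mul_indicator_one_eq]; exact integrable_condExp.indicator hB'

lemma ProbabilityTheory.CondIndep.condExp_indicator_sup_ae_eq [StandardBorelSpace Ω]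
    (hm : m ≤ mΩ) (hm₁ : m₁ ≤ mΩ) (hm₂ : m₂ ≤ mΩ) (h : CondIndep m m₁ m₂ hm μ)
    (hA : MeasurableSet[m₁] A) :
    μ⟦A | m ⊔ m₂⟧ =ᵐ[μ] μ⟦A | m⟧ := by
  set S : Set (Set Ω) := {s | ∃ W B, MeasurableSet[m] W ∧ MeasurableSet[m₂] B ∧ s = W ∩ B}
  have hgen : m ⊔ m₂ = MeasurableSpace.generateFrom S := by
    refine le_antisymm (sup_le ?_ ?_) (MeasurableSpace.generateFrom_le ?_)
    · exact fun W hW => MeasurableSpace.measurableSet_generateFrom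
        ⟨W, univ, hW, .univ, (inter_univ W).symm⟩
    · exact fun B hB => MeasurableSpace.measurableSet_generateFrom
        ⟨univ, B, .univ, hB, (univ_inter B).symm⟩
    · rintro _ ⟨W, B, hW, hB, rfl⟩
      exact (le_sup_left (b := m₂) _ hW).inter (le_sup_right (a := m) _ hB)
  have hS : IsPiSystem S := by
    rintro _ ⟨W₁, B₁, hW₁, hB₁, rfl⟩ _ ⟨W₂, B₂, hW₂, hB₂, rfl⟩ -
    exact ⟨W₁ ∩ W₂, B₁ ∩ B₂, hW₁.inter hW₂, hB₁.inter hB₂, inter_inter_inter_comm _ _ _ _⟩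
  have hA' : MeasurableSet[mΩ] A := hm₁ _ hA
  have hAint : Integrable (A.indicator fun _ => (1 : ℝ)) μ := (integrable_const 1).indicator hA'
  have hsm : StronglyMeasurable[m ⊔ m₂] (μ⟦A | m⟧) :=
    stronglyMeasurable_condExp.mono le_sup_left
  refine (ae_eq_condExp_of_forall_setIntegral_eq (sup_le hm hm₂) hAint
    (fun _ _ _ => integrable_condExp.integrableOn) (fun s hs _ => ?_)
    hsm.aestronglyMeasurable).symm
  refine setIntegral_eq_of_isPiSystem hgen hS (sup_le hm hm₂) integrable_condExp hAint
    (integral_condExp hm) ?_ hs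
  rintro _ ⟨W, B, hW, hB, rfl⟩
  have hB' : MeasurableSet[mΩ] B := hm₂ _ hB
  have hAB := (condIndep_iff m m₁ m₂ hm hm₁ hm₂ μ).mp h A B hA hB
  have hint : Integrable (μ⟦A | m⟧ * B.indicator (1 : Ω → ℝ)) μ := by
    rw [Set.mul_indicator_one_eq]; exact integrable_condExp.indicator hB'
  calc ∫ x in W ∩ B, (μ⟦A | m⟧) x ∂μ
      = ∫ x in W, (μ⟦A | m⟧ * B.indicator (1 : Ω → ℝ)) x ∂μ := by
        rw [Set.mul_indicator_one_eq, setIntegral_indicator hB']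
    _ = ∫ x in W, (μ[μ⟦A | m⟧ * B.indicator (1 : Ω → ℝ) | m]) x ∂μ :=
        (setIntegral_condExp hm hint hW).symm
    _ = ∫ x in W, (μ⟦A ∩ B | m⟧) x ∂μ := by
        refine integral_congr_ae (ae_restrict_of_ae ?_)
        filter_upwards [condExp_mul_of_stronglyMeasurable_left stronglyMeasurable_condExp hint
          ((integrable_const 1).indicator hB'), hAB] with x hx hxAB
        exact hx.trans hxAB.symm
    _ = ∫ x in W ∩ B, A.indicator (fun _ => (1 : ℝ)) x ∂μ := by
        rw [setIntegral_condExp hm ((integrable_const 1).indicator (hA'.inter hB')) hW,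
          setIntegral_indicator (hA'.inter hB'), setIntegral_indicator hA', inter_assoc,
          inter_comm A B]

lemma ProbabilityTheory.CondIndep.weak_union [StandardBorelSpace Ω] (hm : m ≤ mΩ)
    (hm₁ : m₁ ≤ mΩ) (hm₂ : m₂ ≤ mΩ) (hm₃ : m₃ ≤ mΩ) (h : CondIndep m m₁ (m₂ ⊔ m₃) hm μ) :
    CondIndep (m ⊔ m₃) m₁ m₂ (sup_le hm hm₃) μ := by
  rw [condIndep_iff _ _ _ _ hm₁ hm₂]
  intro A B hA hB
  have hm₂₃ : m₂ ⊔ m₃ ≤ mΩ := sup_le hm₂ hm₃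
  have hbig := h.condExp_indicator_sup_ae_eq hm hm₁ hm₂₃ hA
  have hsmall := (condIndep_of_condIndep_of_le_right h le_sup_right).condExp_indicator_sup_ae_eq
    hm hm₁ hm₃ hA
  have hB' : MeasurableSet[m ⊔ (m₂ ⊔ m₃)] B :=
    (le_sup_of_le_right le_sup_left : m₂ ≤ m ⊔ (m₂ ⊔ m₃)) _ hB
  exact condExp_indicator_inter_ae_eq_mul (sup_le_sup_left le_sup_right m) (sup_le hm hm₂₃)
    (hm₁ _ hA) hB' (hbig.trans hsmall.symm)

end CondIndep

namespace CFS

lemma famSigma_union {V Ω Val : Type*} [MeasurableSpace Val] (X : V → Ω → Val) (A B : Set V) :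
    famSigma X (A ∪ B) = famSigma X A ⊔ famSigma X B :=
  iSup_union

lemma IsMarkovBlanket.condIndepFam_of_notMem {V Ω Val : Type*} [MeasurableSpace Ω]
    [StandardBorelSpace Ω] [MeasurableSpace Val] {X : V → Ω → Val}
    {hX : ∀ v, Measurable (X v)} {P : Measure Ω} [IsFiniteMeasure P] {C v : V} {M : Set V}
    (hM : IsMarkovBlanket X hX P C M) (hvC : v ≠ C) (hvM : v ∉ M) :
    CondIndepFam X hX P (univ \ {C, v}) {C} {v} := by
  set R := univ \ (M ∪ {C, v})
  have hCM : C ∉ M := hM.1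
  have hblanket : univ \ (M ∪ {C}) = {v} ∪ R := by
    ext x; by_cases hx : x = v <;> simp [R, hx, hvM, hvC]
  have hrest : univ \ {C, v} = M ∪ R := by
    ext x; by_cases hx : x ∈ M <;> simp [R, hx]
    · exact ⟨fun h => hCM (h ▸ hx), fun h => hvM (h ▸ hx)⟩
  have h := hM.2
  rw [CondIndepFam, hblanket, famSigma_union] at h
  rw [CondIndepFam]
  convert h.weak_union (famSigma_le hX _) (famSigma_le hX _) (famSigma_le hX _)
    (famSigma_le hX _) using 1
  rw [hrest, famSigma_union]

end CFS

theorem stmt_10_general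
    {V Ω Val : Type*} [MeasurableSpace Ω] [StandardBorelSpace Ω]
    [MeasurableSpace Val]
    (X : V → Ω → Val) (hX : ∀ v, Measurable (X v))
    (P : MeasureTheory.Measure Ω) [MeasureTheory.IsProbabilityMeasure P]
    (C : V) (M : Set V) (hM : IsMarkovBlanket X hX P C M) :
    (∀ v, v ≠ C → StronglyRelevant X hX P C v → v ∈ M) ∧
    (∀ v, v ≠ C → v ∉ M → CondIndepFam X hX P (Set.univ \ {C, v}) {C} {v}) :=
  ⟨fun _ hvC => Not.imp_symm (hM.condIndepFam_of_notMem hvC),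
    fun _ hvC => hM.condIndepFam_of_notMem hvC⟩

/-- Every strongly relevant feature belongs to every Markov blanket of `C`; equivalently,
every feature outside `M ∪ {C}` is conditionally independent of `X C` given the rest. -/
theorem stmt_10
    {V Ω Val : Type*} [Fintype V] [MeasurableSpace Ω] [StandardBorelSpace Ω]
    [MeasurableSpace Val] [DiscreteMeasurableSpace Val] [Fintype Val] [Nonempty Val]
    (X : V → Ω → Val) (hX : ∀ v, Measurable (X v))
    (P : MeasureTheory.Measure Ω) [MeasureTheory.IsProbabilityMeasure P]
    (C : V) (M : Set V) (hM : IsMarkovBlanket X hX P C M) :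
    (∀ v, v ≠ C → StronglyRelevant X hX P C v → v ∈ M) ∧
    (∀ v, v ≠ C → v ∉ M → CondIndepFam X hX P (Set.univ \ {C, v}) {C} {v}) :=
  stmt_10_general X hX P C M hM
end

section
/- Let V be a finite set, G a directed acyclic graph on V, and (X_v)_{v∈V} a family of random variables on a probability space (Ω, 𝓕, P), each valued in a nonempty finite type, whose distribution is faithful to G. Then for every C ∈ V and every v ∈ V \ {C}, the feature v is strongly relevant to C if and only if v ∈ mb(C) = Pa(C) ∪ Ch(C) ∪ Sp(C); that is, the strongly relevant features with respect to C are exactly the members of the (unique) Markov boundary of C. -/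
open MeasureTheory ProbabilityTheory Set

open CFS

section Aux

open Set

variable {V : Type*}

lemma mem_mb_of_path {E : V → V → Prop} (hE : Acyclic E) {C v : V} (hvC : v ≠ C)
    {n : ℕ} {f : ℕ → V} (hp : IsUPath E C v n f)
    (hb : ¬ Blocked E (univ \ {C, v}) n f) : v ∈ mb E C := by
  have hS : ∀ t, 0 < t → t < n → f t ∈ (univ \ {C, v} : Set V) := by
    intro t ht1 ht2
    refine ⟨mem_univ _, ?_⟩
    simp only [mem_insert_iff, mem_singleton_iff]
    push_neg
    constructor
    · intro h
      have := hp.inj t (le_of_lt ht2) 0 (Nat.zero_le _) (h.trans hp.start.symm)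
      omega
    · intro h
      have := hp.inj t (le_of_lt ht2) n le_rfl (h.trans hp.finish.symm)
      omega
  have hcoll : ∀ t, 0 < t → t < n → ColliderAt E f t := by
    intro t ht1 ht2
    by_contra hc
    exact hb ⟨t, ht1, ht2, Or.inl ⟨hc, hS t ht1 ht2⟩⟩
  have hn : n ≤ 2 := by
    by_contra hn
    push_neg at hn
    have h1 := hcoll 1 one_pos (by omega)
    have h2 := hcoll 2 (by omega) (by omega)
    have e1 : E (f 2) (f 1) := h1.2
    have e2 : E (f 1) (f 2) := by simpa using h2.1
    exact hE (f 1) (Relation.TransGen.head e2 (Relation.TransGen.single e1))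
  have hpos := hp.pos
  interval_cases n
  · have ha : Adj E (f 0) (f 1) := hp.adj 0 one_pos
    rw [hp.start, hp.finish] at ha
    rcases ha with h | h
    · exact Or.inl (Or.inr h)
    · exact Or.inl (Or.inl h)
  · have h1 := hcoll 1 one_pos (by omega)
    have e1 : E (f 0) (f 1) := by simpa using h1.1
    have e2 : E (f 2) (f 1) := h1.2
    rw [hp.start] at e1
    rw [hp.finish] at e2
    exact Or.inr ⟨hvC, f 1, e2, e1⟩

lemma not_dsep_of_mem_mb {E : V → V → Prop} (hE : Acyclic E) {C v : V} (hvC : v ≠ C)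
    (hm : v ∈ mb E C) : ¬ DSep E C v (univ \ {C, v}) := by
  intro hd
  rcases hm with (h | h) | h
  · -- Pa : E v C
    have hpath : IsUPath E C v 1 (fun t => if t = 0 then C else v) := by
      refine ⟨one_pos, by simp, by simp, ?_, ?_⟩
      · intro s hs t ht hst
        interval_cases s <;> interval_cases t <;> simp_all
      · intro t ht
        have : t = 0 := by omega
        subst this
        simp [Adj]
        exact Or.inr h
    obtain ⟨t, ht0, ht1, -⟩ := hd 1 _ hpath
    omega
  · -- Ch : E C v
    have hpath : IsUPath E C v 1 (fun t => if t = 0 then C else v) := by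
      refine ⟨one_pos, by simp, by simp, ?_, ?_⟩
      · intro s hs t ht hst
        interval_cases s <;> interval_cases t <;> simp_all
      · intro t ht
        have : t = 0 := by omega
        subst this
        simp [Adj]
        exact Or.inl h
    obtain ⟨t, ht0, ht1, -⟩ := hd 1 _ hpath
    omega
  · obtain ⟨-, w, hvw, hCw⟩ := h
    have hwC : w ≠ C := fun hh => hE C (by rw [hh] at hCw; exact Relation.TransGen.single hCw)
    have hwv : w ≠ v := fun hh => hE v (by rw [hh] at hvw; exact Relation.TransGen.single hvw)
    set f : ℕ → V := fun t => if t = 0 then C else if t = 1 then w else v with hf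
    have hf0 : f 0 = C := rfl
    have hf1 : f 1 = w := rfl
    have hf2 : f 2 = v := rfl
    have hpath : IsUPath E C v 2 f := by
      refine ⟨by omega, rfl, rfl, ?_, ?_⟩
      · intro s hs t ht hst
        interval_cases s <;> interval_cases t <;> simp_all [hf]
      · intro t ht
        interval_cases t
        · exact Or.inl (by simpa [hf1, hf0] using hCw)
        · exact Or.inr (by simpa [hf1, hf2] using hvw)
    obtain ⟨t, ht0, ht2, hcase⟩ := hd 2 f hpath
    have ht : t = 1 := by omega
    subst ht
    have hcol : ColliderAt E f 1 := ⟨by simpa [hf0, hf1] using hCw, by simpa [hf1, hf2] using hvw⟩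
    have hwS : f 1 ∈ (univ \ {C, v} : Set V) := by
      rw [hf1]
      refine ⟨mem_univ _, ?_⟩
      simp [hwC, hwv]
    rcases hcase with ⟨hnc, -⟩ | ⟨-, hns, -⟩
    · exact hnc hcol
    · exact hns hwS

end Aux

/-- Under faithfulness, a feature `v ≠ C` is strongly relevant to `C` if and only if
`v ∈ mb(C) = Pa(C) ∪ Ch(C) ∪ Sp(C)`, the (unique) Markov boundary of `C`. -/
theorem stmt_13
    {V Ω Val : Type*} [Fintype V] [MeasurableSpace Ω] [StandardBorelSpace Ω]
    [MeasurableSpace Val] [DiscreteMeasurableSpace Val] [Fintype Val] [Nonempty Val]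
    (E : V → V → Prop) (hE : Acyclic E)
    (X : V → Ω → Val) (hX : ∀ v, Measurable (X v))
    (P : MeasureTheory.Measure Ω) [MeasureTheory.IsProbabilityMeasure P]
    (hF : Faithful E X hX P)
    (C : V) :
    ∀ v, v ≠ C → (StronglyRelevant X hX P C v ↔ v ∈ mb E C) := by
  intro v hvC
  have hd1 : Disjoint ({C} : Set V) {v} := by simp [hvC.symm]
  have hd2 : Disjoint ({C} : Set V) (univ \ {C, v}) := by
    rw [Set.disjoint_left]; intro a ha; simp_all
  have hd3 : Disjoint ({v} : Set V) (univ \ {C, v}) := by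
    rw [Set.disjoint_left]; intro a ha; simp_all
  have hiff := hF {C} {v} (univ \ {C, v}) (Set.singleton_nonempty _)
    (Set.singleton_nonempty _) hd1 hd2 hd3
  rw [StronglyRelevant, hiff]
  constructor
  · intro h
    by_contra hm
    apply h
    intro i hi j hj
    rw [Set.mem_singleton_iff] at hi hj
    subst hi; subst hj
    intro n f hp
    by_contra hb
    exact hm (mem_mb_of_path hE hvC hp hb)
  · intro hm hds
    exact not_dsep_of_mem_mb hE hvC hm (hds C rfl v rfl)
end
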